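/- arXiv:1412.5945 — 3 statements merged into one kernel-verified Lean document; each statement's English description precedes it below -/
import Mathlib

section
/- Let Π be a bilinear form on a real vector space W, let v₁,…,v_N ∈ W be linearly independent, and let c^{i₁⋯i_k} be scalars, not all zero. If ∑ c^{i₁⋯i_k} Π(v_{i₁}, u₁) ⋯ Π(v_{i_k}, u_k) = 0 for all u₁,…,u_k ∈ W, then there exists a nonzero w ∈ W with Π(w, u) = 0 for all u ∈ W. -/
/-- Let `B` be a bilinear form on a real vector space `W`, let `v 1, …, v N ∈ W` be linearly
independent and let the scalars `c i₁⋯i_k` be not all zero. If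
`∑ c i₁⋯i_k · B(v i₁, u 1) ⋯ B(v i_k, u k) = 0` for all `u 1, …, u k ∈ W`, then there is a
nonzero `w ∈ W` with `B(w, u) = 0` for all `u ∈ W`. -/
theorem stmt_10 {W : Type*} [AddCommGroup W] [Module ℝ W]
    (B : W →ₗ[ℝ] W →ₗ[ℝ] ℝ) {N k : ℕ}
    (v : Fin N → W) (hv : LinearIndependent ℝ v)
    (c : (Fin k → Fin N) → ℝ) (hc : c ≠ 0)
    (h : ∀ u : Fin k → W, ∑ i : Fin k → Fin N, c i * ∏ j : Fin k, B (v (i j)) (u j) = 0) :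
    ∃ w : W, w ≠ 0 ∧ ∀ u : W, B w u = 0 := by
  by_contra hw
  push_neg at hw
  have hker : ∀ w : W, (∀ u, B w u = 0) → w = 0 := by
    intro w hwu
    by_contra h0
    obtain ⟨u, hu⟩ := hw w h0
    exact hu (hwu u)
  set π : W →ₗ[ℝ] (Fin N → ℝ) := LinearMap.pi (fun i => B (v i)) with hπ
  have hsurj : Function.Surjective π := by
    rw [← LinearMap.range_eq_top]
    by_contra hr
    obtain ⟨φ, hφ0, hφ⟩ := Submodule.exists_dual_map_eq_bot_of_lt_top
      (lt_top_iff_ne_top.2 hr) inferInstance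
    set a : Fin N → ℝ := fun i => φ (Pi.single i 1) with ha
    have hφx : ∀ x : Fin N → ℝ, φ x = ∑ i, x i • a i := by
      intro x
      have h' := LinearMap.pi_apply_eq_sum_univ φ x
      rw [h']
      refine Finset.sum_congr rfl fun i _ => ?_
      congr 1
      congr 1
      ext j
      simp [Pi.single_apply, eq_comm]
    have hφr : ∀ w : W, φ (π w) = 0 := by
      intro w
      have : φ (π w) ∈ (LinearMap.range π).map φ :=
        Submodule.mem_map_of_mem (LinearMap.mem_range_self π w)
      rwa [hφ, Submodule.mem_bot] at this
    have key : ∀ w : W, B (∑ i, a i • v i) w = 0 := by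
      intro w
      have := hφr w
      rw [hφx] at this
      simpa [π, LinearMap.sum_apply, mul_comm, smul_eq_mul] using this
    have hz : (∑ i, a i • v i) = 0 := hker _ key
    have ha0 : ∀ i, a i = 0 := Fintype.linearIndependent_iff.1 hv a hz
    apply hφ0
    apply LinearMap.ext
    intro x
    rw [hφx]
    simp [ha0]
  choose e he using fun i => hsurj (Pi.single i 1)
  obtain ⟨i₀, hi₀⟩ := Function.ne_iff.1 hc
  have hBe : ∀ i j : Fin N, B (v i) (e j) = if i = j then 1 else 0 := by
    intro i j
    have := congrFun (he j) i
    simpa [π, Pi.single_apply] using this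
  have := h (fun j => e (i₀ j))
  rw [Finset.sum_eq_single i₀] at this
  · apply hi₀
    simpa [hBe] using this
  · intro i _ hi
    have : ∃ j, i j ≠ i₀ j := Function.ne_iff.1 hi
    obtain ⟨j, hj⟩ := this
    rw [Finset.prod_eq_zero (Finset.mem_univ j)]
    · ring
    · simp [hBe, hj]
  · simp
end

section
/- If an antisymmetric bilinear form Π on a real vector space W is weakly non-degenerate, then the induced bilinear form Π^{⊗k} on the k-th symmetric tensor power S^k W is weakly non-degenerate. -/
open scoped TensorProduct
open PiTensorProduct

/-- The bilinear form `B^{⊗k}` induced on the `k`-th tensor power `⨂[ℝ]^k W` by a bilinear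
form `B` on `W`; on simple tensors it is
`B^{⊗k}(v₁⊗⋯⊗v_k, u₁⊗⋯⊗u_k) = B(v₁,u₁)⋯B(v_k,u_k)`. -/
noncomputable def tensorPowForm {W : Type*} [AddCommGroup W] [Module ℝ W] (k : ℕ)
    (B : W →ₗ[ℝ] W →ₗ[ℝ] ℝ) :
    (⨂[ℝ]^k W) →ₗ[ℝ] (⨂[ℝ]^k W) →ₗ[ℝ] ℝ :=
  LinearMap.compr₂
    (piTensorHomMap.comp (PiTensorProduct.map fun _ : Fin k => B))
    (constantBaseRingEquiv (Fin k) ℝ).toLinearMap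

/-- The subspace `S^k W ⊆ ⨂[ℝ]^k W` of fully symmetric `k`-tensors: those fixed by every
permutation of the tensor factors. -/
noncomputable def SymTensor (W : Type*) [AddCommGroup W] [Module ℝ W] (k : ℕ) : Submodule ℝ (⨂[ℝ]^k W) :=
  ⨅ σ : Equiv.Perm (Fin k),
    LinearMap.eqLocus ((reindex ℝ (fun _ : Fin k => W) σ).toLinearMap) LinearMap.id

/-!
Weak non-degeneracy of `B` lets us pair any finite linearly independent family `e` with a dual
family `x`, `B (x i) (e j) = δᵢⱼ`. Every tensor `y` is a combination of the products
`e_{α 1} ⊗ ⋯ ⊗ e_{α k}` for such a family, and pairing with `x_{α 1} ⊗ ⋯ ⊗ x_{α k}` extracts the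
coefficient of `e_α`, so `B^{⊗k}` is weakly non-degenerate on all of `⨂^k W`. Since `B^{⊗k}` is
invariant under permuting the factors of both arguments, a symmetric `y` pairs with `x` exactly
as with the symmetrization of `x`; hence testing against symmetric tensors suffices.
-/

theorem LinearMap.SeparatingRight.exists_apply_eq_ite {K M N : Type*} [Field K] [AddCommGroup M]
    [Module K M] [AddCommGroup N] [Module K N] {B : M →ₗ[K] N →ₗ[K] K} (hB : B.SeparatingRight)
    {ι : Type*} [Finite ι] [DecidableEq ι] {e : ι → N} (he : LinearIndependent K e) :
    ∃ x : ι → M, ∀ i j, B (x i) (e j) = if i = j then 1 else 0 := by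
  have hli : LinearIndependent K fun j => ⇑(B.flip (e j)) :=
    (he.map' B.flip (LinearMap.separatingRight_iff_flip_ker_eq_bot.mp hB)).map'
      (LinearMap.ltoFun K M K K) (LinearMap.ker_eq_bot.mpr DFunLike.coe_injective)
  let Φ : M →ₗ[K] ι → K := LinearMap.pi fun j => B.flip (e j)
  have hΦ : LinearMap.range Φ = ⊤ := by
    rw [← span_flip_eq_top_iff_linearIndependent.mpr hli, ← Submodule.span_eq (LinearMap.range Φ),
      LinearMap.coe_range]
    rfl
  choose x hx using fun i => LinearMap.range_eq_top.mp hΦ (Pi.single i 1)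
  refine ⟨x, fun i j => ?_⟩
  simpa [Φ, Pi.single_apply, eq_comm] using congrFun (hx i) j

theorem PiTensorProduct.exists_fg_mem_range_map_subtype {R W ι : Type*} [CommSemiring R]
    [AddCommMonoid W] [Module R W] [Finite ι] (y : ⨂[R] _ : ι, W) :
    ∃ V : Submodule R W, V.FG ∧ y ∈ LinearMap.range (map fun _ : ι => V.subtype) := by
  induction y using PiTensorProduct.induction_on with
  | smul_tprod r v =>
    refine ⟨Submodule.span R (Set.range v), Submodule.fg_span (Set.finite_range v), ?_⟩
    refine ⟨r • tprod R fun i => ⟨v i, Submodule.subset_span ⟨i, rfl⟩⟩, ?_⟩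
    simp [map_tprod]
  | add y₁ y₂ h₁ h₂ =>
    obtain ⟨V₁, hV₁, hy₁⟩ := h₁
    obtain ⟨V₂, hV₂, hy₂⟩ := h₂
    have hle : ∀ V ≤ V₁ ⊔ V₂, LinearMap.range (map fun _ : ι => V.subtype) ≤
        LinearMap.range (map fun _ : ι => (V₁ ⊔ V₂).subtype) := fun V hV => by
      simp_rw [← Submodule.subtype_comp_inclusion V _ hV, map_comp]
      exact LinearMap.range_comp_le_range _ _
    exact ⟨V₁ ⊔ V₂, hV₁.sup hV₂, add_mem (hle V₁ le_sup_left hy₁) (hle V₂ le_sup_right hy₂)⟩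

theorem PiTensorProduct.exists_linearIndependent_mem_span_tprod {K W ι : Type*} [Field K]
    [AddCommGroup W] [Module K W] [Finite ι] (y : ⨂[K] _ : ι, W) :
    ∃ (n : ℕ) (e : Fin n → W), LinearIndependent K e ∧
      y ∈ Submodule.span K (Set.range fun α : ι → Fin n => tprod K fun i => e (α i)) := by
  obtain ⟨V, hV, z, rfl⟩ := exists_fg_mem_range_map_subtype y
  have := Module.Finite.iff_fg.mpr hV
  let b := Module.finBasis K V
  refine ⟨_, fun j => b j, b.linearIndependent.map' V.subtype V.ker_subtype, ?_⟩
  have hz : z ∈ Submodule.span K (Set.range (Basis.piTensorProduct fun _ : ι => b)) := by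
    rw [Module.Basis.span_eq]; trivial
  have hfun : ⇑(map fun _ : ι => V.subtype) ∘ ⇑(Basis.piTensorProduct fun _ : ι => b) =
      fun α => tprod K fun i => (b (α i) : W) := funext fun α => by
    rw [Function.comp_apply, Basis.piTensorProduct_apply, map_tprod]
    rfl
  simpa only [Submodule.map_span, ← Set.range_comp, hfun] using
    Submodule.mem_map_of_mem (f := map fun _ : ι => V.subtype) hz

section TensorPower

variable {W : Type*} [AddCommGroup W] [Module ℝ W] {k : ℕ} (B : W →ₗ[ℝ] W →ₗ[ℝ] ℝ)

theorem tensorPowForm_tprod (v u : Fin k → W) :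
    tensorPowForm k B (tprod ℝ v) (tprod ℝ u) = ∏ i, B (v i) (u i) := by
  simp [tensorPowForm, map_tprod]

theorem tensorPowForm_reindex (σ : Equiv.Perm (Fin k)) (x y : ⨂[ℝ]^k W) :
    tensorPowForm k B (reindex ℝ (fun _ => W) σ x) (reindex ℝ (fun _ => W) σ y) =
      tensorPowForm k B x y := by
  suffices (tensorPowForm k B).compl₁₂ (reindex ℝ (fun _ => W) σ).toLinearMap
      (reindex ℝ (fun _ => W) σ).toLinearMap = tensorPowForm k B from
    LinearMap.congr_fun₂ this x y
  ext v u
  simp [tensorPowForm_tprod, reindex_tprod, Equiv.prod_comp σ.symm fun i => B (v i) (u i)]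

theorem separatingRight_tensorPowForm (hB : B.SeparatingRight) :
    (tensorPowForm k B).SeparatingRight := by
  intro y hy
  obtain ⟨n, e, he, hspan⟩ := exists_linearIndependent_mem_span_tprod y
  obtain ⟨x, hx⟩ := hB.exists_apply_eq_ite he
  obtain ⟨c, rfl⟩ := (Submodule.mem_span_range_iff_exists_fun ℝ).mp hspan
  have hc : ∀ α, c α = 0 := fun α => by
    simpa [map_sum, tensorPowForm_tprod, hx, Finset.prod_boole, ← funext_iff] using
      hy (tprod ℝ fun i => x (α i))
  simp [hc]

theorem mem_symTensor_iff {y : ⨂[ℝ]^k W} :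
    y ∈ SymTensor W k ↔ ∀ σ : Equiv.Perm (Fin k), reindex ℝ (fun _ => W) σ y = y := by
  simp [SymTensor, Submodule.mem_iInf, LinearMap.mem_eqLocus]

variable (W k) in
noncomputable def symmetrize : ⨂[ℝ]^k W →ₗ[ℝ] ⨂[ℝ]^k W :=
  (k.factorial : ℝ)⁻¹ • ∑ σ : Equiv.Perm (Fin k), (reindex ℝ (fun _ => W) σ).toLinearMap

theorem symmetrize_mem_symTensor (x : ⨂[ℝ]^k W) : symmetrize W k x ∈ SymTensor W k := by
  refine mem_symTensor_iff.mpr fun τ => ?_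
  simp only [symmetrize, LinearMap.smul_apply, LinearMap.coe_sum, Finset.sum_apply,
    LinearEquiv.coe_coe, map_smul, map_sum]
  congr 1
  exact Fintype.sum_equiv (Equiv.mulLeft τ) _ _ fun σ => reindex_reindex σ τ x

theorem tensorPowForm_symmetrize_left {y : ⨂[ℝ]^k W}
    (hy : y ∈ SymTensor W k) (x : ⨂[ℝ]^k W) :
    tensorPowForm k B (symmetrize W k x) y = tensorPowForm k B x y := by
  have hσ : ∀ σ : Equiv.Perm (Fin k),
      tensorPowForm k B (reindex ℝ (fun _ => W) σ x) y = tensorPowForm k B x y := fun σ => by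
    conv_lhs => rw [← mem_symTensor_iff.mp hy σ]
    exact tensorPowForm_reindex B σ x y
  have hk : (k.factorial : ℝ) ≠ 0 := mod_cast k.factorial_ne_zero
  simp [symmetrize, hσ, Fintype.card_perm, hk]

end TensorPower

theorem stmt_11_general {W : Type*} [AddCommGroup W] [Module ℝ W] (k : ℕ)
    (B : W →ₗ[ℝ] W →ₗ[ℝ] ℝ)
    (hnd : ∀ y : W, (∀ x : W, B x y = 0) → y = 0) :
    ∀ y ∈ SymTensor W k, (∀ x ∈ SymTensor W k, tensorPowForm k B x y = 0) → y = 0 := by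
  intro y hy hxy
  refine separatingRight_tensorPowForm B hnd y fun x => ?_
  rw [← tensorPowForm_symmetrize_left B hy x]
  exact hxy _ (symmetrize_mem_symTensor x)

/-- If the antisymmetric bilinear form `B` on `W` is weakly non-degenerate, then the induced
bilinear form `B^{⊗k}` is weakly non-degenerate on the symmetric tensors `S^k W`. -/
theorem stmt_11 {W : Type*} [AddCommGroup W] [Module ℝ W] (k : ℕ)
    (B : W →ₗ[ℝ] W →ₗ[ℝ] ℝ)
    (hanti : ∀ x y : W, B x y = - B y x)
    (hnd : ∀ y : W, (∀ x : W, B x y = 0) → y = 0) :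
    ∀ y ∈ SymTensor W k, (∀ x ∈ SymTensor W k, tensorPowForm k B x y = 0) → y = 0 :=
  stmt_11_general k B hnd
end

section
/- Uniqueness of one-particle structures: if (K, H) and (K′, H′) are two one-particle structures for the same data (Sol, τ, μ) — i.e., both K and K′ are ℝ-linear maps into complex Hilbert spaces with K(Sol) + iK(Sol) dense (respectively for K′) and ⟨Kx, Ky⟩ = μ(x,y) + (i/2)τ(x,y) = ⟨K′x, K′y⟩ — then there exists a surjective isometric (unitary) operator V : H → H′ with V∘K = K′. -/
/-!
Since `⟨Kx, Ky⟩ = ⟨K'x, K'y⟩`, the vectors `∑ cᵢ K xᵢ` and `∑ cᵢ K' xᵢ` always have the same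
norm. Hence the closure `G` of `{(∑ cᵢ K xᵢ, ∑ cᵢ K' xᵢ)}` in `H × H'` (sup norm) is a complete subspace on
which both coordinate projections are isometric; their ranges are closed and contain the dense
spans of `K(Sol)` and `K'(Sol)`, so both are surjective, and `V` is the second projection composed
with the inverse of the first.
-/

open Finsupp Set

section Graph
variable {𝕜 E F : Type*} [NormedField 𝕜] [SeminormedAddCommGroup E] [NormedSpace 𝕜 E]
  [SeminormedAddCommGroup F] [NormedSpace 𝕜 F]

def Submodule.fstIsometry (G : Submodule 𝕜 (E × F)) (hG : ∀ p ∈ G, ‖p.2‖ ≤ ‖p.1‖) :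
    G →ₗᵢ[𝕜] E where
  toLinearMap := (LinearMap.fst 𝕜 E F).comp G.subtype
  norm_map' p := (max_eq_left (hG p p.2)).symm

def Submodule.sndIsometry (G : Submodule 𝕜 (E × F)) (hG : ∀ p ∈ G, ‖p.1‖ ≤ ‖p.2‖) :
    G →ₗᵢ[𝕜] F where
  toLinearMap := (LinearMap.snd 𝕜 E F).comp G.subtype
  norm_map' p := (max_eq_right (hG p p.2)).symm

end Graph

theorem LinearIsometry.surjective_of_denseRange {𝕜 E F : Type*} [NormedField 𝕜]
    [SeminormedAddCommGroup E] [NormedSpace 𝕜 E] [CompleteSpace E]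
    [NormedAddCommGroup F] [NormedSpace 𝕜 F] (f : E →ₗᵢ[𝕜] F) (hf : DenseRange f) :
    Function.Surjective f := by
  rw [← range_eq_univ, ← hf.closure_range,
    f.isometry.isUniformInducing.isComplete_range.isClosed.closure_eq]

section InnerProduct
variable {𝕜 E F : Type*} [RCLike 𝕜]
  [NormedAddCommGroup E] [InnerProductSpace 𝕜 E] [NormedAddCommGroup F] [InnerProductSpace 𝕜 F]

theorem norm_linearCombination_eq_of_inner_eq {ι : Type*} {v : ι → E} {w : ι → F}
    (h : ∀ i j, inner 𝕜 (v i) (v j) = inner 𝕜 (w i) (w j)) (c : ι →₀ 𝕜) :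
    ‖linearCombination 𝕜 v c‖ = ‖linearCombination 𝕜 w c‖ := by
  have hsq : (‖linearCombination 𝕜 v c‖ ^ 2 : 𝕜) = ‖linearCombination 𝕜 w c‖ ^ 2 := by
    simp only [← inner_self_eq_norm_sq_to_K, linearCombination_apply, Finsupp.sum, sum_inner,
      inner_sum, inner_smul_left, inner_smul_right, h]
  exact (sq_eq_sq₀ (norm_nonneg _) (norm_nonneg _)).1 (by exact_mod_cast hsq)

theorem exists_linearIsometryEquiv_apply_eq_of_inner_eq [CompleteSpace E] [CompleteSpace F]
    {ι : Type*} (v : ι → E) (w : ι → F)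
    (h : ∀ i j, inner 𝕜 (v i) (v j) = inner 𝕜 (w i) (w j))
    (hv : Dense (Submodule.span 𝕜 (range v) : Set E))
    (hw : Dense (Submodule.span 𝕜 (range w) : Set F)) :
    ∃ V : E ≃ₗᵢ[𝕜] F, ∀ i, V (v i) = w i := by
  set L := (linearCombination 𝕜 v).prod (linearCombination 𝕜 w)
  set G := (LinearMap.range L).topologicalClosure
  have : CompleteSpace G := (LinearMap.range L).isClosed_topologicalClosure.completeSpace_coe
  have hG : ∀ p ∈ G, ‖p.1‖ = ‖p.2‖ := by
    have hclosed : IsClosed {p : E × F | ‖p.1‖ = ‖p.2‖} :=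
      isClosed_eq continuous_fst.norm continuous_snd.norm
    refine fun p hp => hclosed.closure_subset_iff.2 ?_ hp
    rintro _ ⟨c, rfl⟩
    exact norm_linearCombination_eq_of_inner_eq h c
  have hL : ∀ c, L c ∈ G := fun c =>
    (LinearMap.range L).le_topologicalClosure (LinearMap.mem_range_self L c)
  have hmem : ∀ i, (v i, w i) ∈ G := fun i => by simpa [L] using hL (single i 1)
  set A := G.fstIsometry fun p hp => (hG p hp).ge
  set B := G.sndIsometry fun p hp => (hG p hp).le
  have hA : Function.Surjective A := by
    refine A.surjective_of_denseRange (hv.mono ?_)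
    rw [← range_linearCombination]
    rintro _ ⟨c, rfl⟩
    exact ⟨⟨L c, hL c⟩, rfl⟩
  have hB : Function.Surjective B := by
    refine B.surjective_of_denseRange (hw.mono ?_)
    rw [← range_linearCombination]
    rintro _ ⟨c, rfl⟩
    exact ⟨⟨L c, hL c⟩, rfl⟩
  refine ⟨(LinearIsometryEquiv.ofSurjective A hA).symm.trans
    (LinearIsometryEquiv.ofSurjective B hB), fun i => ?_⟩
  have : (LinearIsometryEquiv.ofSurjective A hA).symm (v i) = ⟨(v i, w i), hmem i⟩ :=
    (LinearIsometryEquiv.symm_apply_eq _).2 rfl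
  simp only [LinearIsometryEquiv.trans_apply, this]
  rfl

end InnerProduct

theorem stmt_18_general {Sol H H' : Type*} [AddCommGroup Sol] [Module ℝ Sol]
    [NormedAddCommGroup H] [InnerProductSpace ℂ H] [CompleteSpace H]
    [NormedAddCommGroup H'] [InnerProductSpace ℂ H'] [CompleteSpace H']
    (τ μ : Sol →ₗ[ℝ] Sol →ₗ[ℝ] ℝ)
    (K : Sol →ₗ[ℝ] H) (K' : Sol →ₗ[ℝ] H')
    (hdense : Dense ((Submodule.span ℂ (Set.range K) : Submodule ℂ H) : Set H))
    (hdense' : Dense ((Submodule.span ℂ (Set.range K') : Submodule ℂ H') : Set H'))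
    (hK : ∀ x y : Sol,
      (inner ℂ (K x) (K y) : ℂ) = (μ x y : ℂ) + (Complex.I / 2) * (τ x y : ℂ))
    (hK' : ∀ x y : Sol,
      (inner ℂ (K' x) (K' y) : ℂ) = (μ x y : ℂ) + (Complex.I / 2) * (τ x y : ℂ)) :
    ∃ V : H ≃ₗᵢ[ℂ] H', ∀ x : Sol, V (K x) = K' x :=
  exists_linearIsometryEquiv_apply_eq_of_inner_eq K K' (fun x y => by rw [hK, hK']) hdense hdense'

/-- Uniqueness of one-particle structures: if `(K, H)` and `(K', H')` are one-particle
structures for the same data `(Sol, τ, μ)` — `K(Sol) + iK(Sol)` dense in `H` (and similarly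
for `K'`) and `⟨Kx, Ky⟩ = μ(x,y) + (i/2)τ(x,y) = ⟨K'x, K'y⟩` — then there is a surjective
isometric (unitary) operator `V : H → H'` with `V ∘ K = K'`. -/
theorem stmt_18 {Sol H H' : Type*} [AddCommGroup Sol] [Module ℝ Sol]
    [NormedAddCommGroup H] [InnerProductSpace ℂ H] [CompleteSpace H]
    [NormedAddCommGroup H'] [InnerProductSpace ℂ H'] [CompleteSpace H']
    (τ μ : Sol →ₗ[ℝ] Sol →ₗ[ℝ] ℝ)
    (hτ : ∀ x y : Sol, τ x y = - τ y x) (hμ : ∀ x y : Sol, μ x y = μ y x)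
    (hineq : ∀ x y : Sol, |τ x y| ^ 2 / 4 ≤ μ x x * μ y y)
    (K : Sol →ₗ[ℝ] H) (K' : Sol →ₗ[ℝ] H')
    (hdense : Dense ((Submodule.span ℂ (Set.range K) : Submodule ℂ H) : Set H))
    (hdense' : Dense ((Submodule.span ℂ (Set.range K') : Submodule ℂ H') : Set H'))
    (hK : ∀ x y : Sol,
      (inner ℂ (K x) (K y) : ℂ) = (μ x y : ℂ) + (Complex.I / 2) * (τ x y : ℂ))
    (hK' : ∀ x y : Sol,
      (inner ℂ (K' x) (K' y) : ℂ) = (μ x y : ℂ) + (Complex.I / 2) * (τ x y : ℂ)) :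
    ∃ V : H ≃ₗᵢ[ℂ] H', ∀ x : Sol, V (K x) = K' x :=
  stmt_18_general τ μ K K' hdense hdense' hK hK'
end
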